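/- arXiv:2601.20743 — 4 statements merged into one kernel-verified Lean document; each statement's English description precedes it below -/
import Mathlib

section
/- Let t ≥ 2 be an integer and (n_k)_{k≥1} a strictly increasing sequence of positive integers with limsup_{k→∞} n_{k+1}/n_k = ∞. Then the number ∑_{k≥1} t^{-n_k} is transcendental. -/
/-!
The partial sum through the term `1 / t ^ n k` is a rational `a / t ^ n k`, and the tail is positive and at most
`2 / t ^ n (k + 1)`. When `n (k + 1) / n k` exceeds `m + 1` this error is below
`1 / (t ^ n k) ^ m`, so the number is a Liouville number and hence transcendental.
-/

open Filter Finset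

section LacunarySeries

variable {n : ℕ → ℕ}

lemma summable_one_div_pow_of_strictMono {t : ℝ} (ht : 1 < t) (hn : StrictMono n) :
    Summable fun k => 1 / t ^ n k := by
  have hr : 1 / t < 1 := (div_lt_one (by linarith)).mpr ht
  refine (summable_geometric_of_lt_one (by positivity) hr).of_nonneg_of_le
    (fun k => by positivity) fun k => ?_
  rw [one_div_pow]
  exact one_div_le_one_div_of_le (by positivity) (pow_le_pow_right₀ ht.le (hn.id_le k))

lemma tsum_one_div_pow_add_le {t : ℝ} (ht : 2 ≤ t) (hn : StrictMono n) (K : ℕ) :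
    ∑' j, 1 / t ^ n (j + K) ≤ 2 / t ^ n K := by
  have ht1 : 1 ≤ t := by linarith
  have hterm (j : ℕ) : 1 / t ^ n (j + K) ≤ 1 / t ^ n K * (1 / 2) ^ j := by
    rw [one_div_pow, div_mul_div_comm, one_mul]
    refine one_div_le_one_div_of_le (by positivity) ?_
    calc t ^ n K * 2 ^ j ≤ t ^ n K * t ^ j := by gcongr
      _ = t ^ (j + n K) := by rw [pow_add, mul_comm]
      _ ≤ t ^ n (j + K) := pow_le_pow_right₀ ht1 (hn.add_le_nat j K)
  have hsum : Summable fun j => 1 / t ^ n (j + K) :=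
    (summable_nat_add_iff K).mpr (summable_one_div_pow_of_strictMono (by linarith) hn)
  calc ∑' j, 1 / t ^ n (j + K) ≤ ∑' j, 1 / t ^ n K * (1 / 2) ^ j :=
        hsum.tsum_le_tsum hterm (summable_geometric_two.mul_left _)
    _ = 2 / t ^ n K := by rw [tsum_mul_left, tsum_geometric_two, one_div_mul_eq_div]

lemma sum_range_one_div_pow_eq {t : ℝ} (ht : t ≠ 0) (hn : Monotone n) (k : ℕ) :
    ∑ i ∈ range (k + 1), 1 / t ^ n i = (∑ i ∈ range (k + 1), t ^ (n k - n i)) / t ^ n k := by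
  rw [sum_div]
  refine sum_congr rfl fun i hi => ?_
  have hle : n i ≤ n k := hn (Nat.lt_succ_iff.mp (mem_range.mp hi))
  rw [div_eq_div_iff (pow_ne_zero _ ht) (pow_ne_zero _ ht), one_mul, ← pow_add,
    Nat.sub_add_cancel hle]

lemma two_div_pow_lt_one_div_pow {t : ℝ} (ht : 2 ≤ t) {M N : ℕ} (h : M + 1 < N) :
    2 / t ^ N < 1 / t ^ M := by
  have ht0 : 0 < t := by linarith
  rw [div_lt_div_iff₀ (by positivity) (by positivity), one_mul]
  calc 2 * t ^ M ≤ t ^ (M + 1) := by rw [pow_succ']; gcongr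
    _ < t ^ N := pow_lt_pow_right₀ (by linarith) h

theorem liouville_tsum_one_div_pow {t : ℕ} (ht : 2 ≤ t) (hn : StrictMono n)
    (hlac : ∀ C : ℝ, ∃ᶠ k in atTop, C * n k < n (k + 1)) :
    Liouville (∑' k, (1 : ℝ) / t ^ n k) := by
  have ht2 : (2 : ℝ) ≤ t := by exact_mod_cast ht
  have hsum := summable_one_div_pow_of_strictMono (by linarith) hn
  intro m
  obtain ⟨k, hratio, hk⟩ := ((hlac (m + 1)).and_eventually (eventually_ge_atTop 1)).exists
  have hnk : 1 ≤ n k := (Nat.zero_le _).trans_lt (hn (by omega : 0 < k))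
  have hgap : m * n k + 1 < n (k + 1) := by
    have : (m + 1) * n k < n (k + 1) := by exact_mod_cast hratio
    nlinarith
  set tail := ∑' j, (1 : ℝ) / t ^ n (j + (k + 1))
  have htail_pos : 0 < tail :=
    ((summable_nat_add_iff (k + 1)).mpr hsum).tsum_pos (fun j => by positivity) 0 (by positivity)
  have hsplit : ∑' j, (1 : ℝ) / t ^ n j
      = ((∑ i ∈ range (k + 1), (t : ℤ) ^ (n k - n i) : ℤ) : ℝ) / ((t ^ n k : ℤ) : ℝ) + tail := by
    push_cast
    rw [← sum_range_one_div_pow_eq (by positivity) hn.monotone]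
    exact (hsum.sum_add_tsum_nat_add _).symm
  refine ⟨∑ i ∈ range (k + 1), (t : ℤ) ^ (n k - n i), t ^ n k,
    one_lt_pow₀ (by omega) (by omega), ?_, ?_⟩ <;> rw [hsplit]
  · exact (lt_add_of_pos_right _ htail_pos).ne'
  · rw [add_sub_cancel_left, abs_of_pos htail_pos]
    push_cast
    rw [← pow_mul, mul_comm]
    exact (tsum_one_div_pow_add_le ht2 hn _).trans_lt (two_div_pow_lt_one_div_pow ht2 hgap)

end LacunarySeries

theorem stmt2_general (t : ℕ) (ht : 2 ≤ t) (n : ℕ → ℕ)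
    (hmono : StrictMono n)
    (hlac : ∀ C : ℝ, ∃ᶠ k : ℕ in Filter.atTop, C * (n k : ℝ) < (n (k + 1) : ℝ)) :
    Transcendental ℚ (∑' k : ℕ, (1 : ℝ) / t ^ n k) :=
  fun halg => (liouville_tsum_one_div_pow ht hmono hlac).transcendental
    ((IsFractionRing.isAlgebraic_iff ℤ ℚ ℝ).mpr halg)

theorem stmt2 (t : ℕ) (ht : 2 ≤ t) (n : ℕ → ℕ)
    (hmono : StrictMono n) (hpos : ∀ k, 1 ≤ n k)
    (hlac : ∀ C : ℝ, ∃ᶠ k : ℕ in Filter.atTop, C * (n k : ℝ) < (n (k + 1) : ℝ)) :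
    Transcendental ℚ (∑' k : ℕ, (1 : ℝ) / t ^ n k) :=
  stmt2_general t ht n hmono hlac
end

section
/- Let (c(n))_{n≥1} be a sequence of complex numbers, q > 1 a real number, and suppose ∑_{n≥1} |c(n)|/q^n converges. Suppose there are sequences (x_n), (w_n), (z_n) of reals ≥ 1 and η ∈ (0,1] with: x_n → ∞; #{m < x_n : c(m) ≠ 0} = o(x_n/z_n); and ∑_{N < η x_n} ∑_{j ≥ z_n} |c(N+j)|/q^j = o(x_n/w_n). Then for every fixed δ > 0, #{N ∈ [1, η x_n) ∩ ℤ : w_n · ∑_{j≥0} |c(N+j)|/q^j < δ} = η x_n + o(x_n) as n → ∞. -/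
/-! For fixed `n`, a starting point `N` can only be exceptional if either `c` has a nonzero value
in the window `[N, N + z_n)`, or the far tail `∑_{j ≥ z_n} |c(N+j)|/q^j` is at least `δ / w_n`.
Each nonzero value of `c` below `x_n` spoils at most `⌈z_n⌉` windows, so by sparseness there are
`O(z_n · #{m < x_n : c(m) ≠ 0}) = o(x_n)` starting points of the first kind, and by Markov's
inequality the hypothesis on the far tails leaves `o(x_n)` starting points of the second kind. -/

open Filter Asymptotics Finset

variable {E : Type*} [SeminormedAddCommGroup E]

noncomputable def weightedTail (c : ℕ → E) (q : ℝ) (N : ℕ) : ℝ :=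
  ∑' j : ℕ, ‖c (N + j)‖ / q ^ j

noncomputable def farTail (c : ℕ → E) (q z : ℝ) (N : ℕ) : ℝ :=
  ∑' j : ℕ, if z ≤ (j : ℝ) then ‖c (N + j)‖ / q ^ j else 0

lemma weightedTail_eq_farTail {c : ℕ → E} {q z : ℝ} {N : ℕ}
    (h : ∀ j : ℕ, (j : ℝ) < z → c (N + j) = 0) : weightedTail c q N = farTail c q z N := by
  refine tsum_congr fun j => ?_
  split_ifs with hj
  · rfl
  · simp [h j (not_le.mp hj)]

lemma farTail_nonneg (c : ℕ → E) {q : ℝ} (hq : 0 ≤ q) (z : ℝ) (N : ℕ) : 0 ≤ farTail c q z N :=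
  tsum_nonneg fun j => by split_ifs <;> positivity

lemma Finset.card_filter_le_sum_div {ι : Type*} {s : Finset ι} {f : ι → ℝ}
    (hf : ∀ i ∈ s, 0 ≤ f i) {δ : ℝ} (hδ : 0 < δ) : (#{i ∈ s | δ ≤ f i} : ℝ) ≤ (∑ i ∈ s, f i) / δ := by
  rw [le_div_iff₀ hδ]
  calc (#{i ∈ s | δ ≤ f i} : ℝ) * δ ≤ ∑ i ∈ s with δ ≤ f i, f i := by
        simpa using card_nsmul_le_sum _ f δ fun i hi => (mem_filter.mp hi).2
    _ ≤ ∑ i ∈ s, f i := sum_le_sum_of_subset_of_nonneg (filter_subset _ s) fun i hi _ => hf i hi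

lemma card_filter_exists_lt_add_mem_le (s T : Finset ℕ) (K : ℕ) :
    #{N ∈ s | ∃ j < K, N + j ∈ T} ≤ K * #T := by
  calc #{N ∈ s | ∃ j < K, N + j ∈ T} ≤ #(T.biUnion fun m => Ico (m + 1 - K) (m + 1)) := by
        refine card_le_card fun N hN => ?_
        obtain ⟨-, j, hj, hjT⟩ := mem_filter.mp hN
        exact mem_biUnion.mpr ⟨N + j, hjT, mem_Ico.mpr ⟨by omega, by omega⟩⟩
    _ ≤ ∑ m ∈ T, #(Ico (m + 1 - K) (m + 1)) := card_biUnion_le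
    _ ≤ ∑ m ∈ T, K := sum_le_sum fun m _ => by rw [Nat.card_Ico]; omega
    _ = K * #T := by rw [sum_const, smul_eq_mul, mul_comm]

lemma card_filter_exists_lt_add_le {p : ℕ → Prop} [DecidablePred p] {a X Y : ℕ} (hXY : X ≤ Y)
    (K : ℕ) : #{N ∈ Ico a X | ∃ j < K, p (N + j)} ≤ K * #{m ∈ Ico a Y | p m} + K := by
  calc #{N ∈ Ico a X | ∃ j < K, p (N + j)}
      ≤ #({N ∈ Ico a X | ∃ j < K, N + j ∈ {m ∈ Ico a Y | p m}} ∪ Ico (Y - K) Y) := by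
        refine card_le_card fun N hN => ?_
        simp only [mem_filter, mem_Ico, mem_union] at hN ⊢
        obtain ⟨⟨haN, hNX⟩, j, hj, hp⟩ := hN
        by_cases hY : N + j < Y
        · exact Or.inl ⟨⟨haN, hNX⟩, j, hj, ⟨by omega, hY⟩, hp⟩
        · exact Or.inr ⟨by omega, by omega⟩
    _ ≤ K * #{m ∈ Ico a Y | p m} + K :=
        (card_union_le _ _).trans <| add_le_add (card_filter_exists_lt_add_mem_le _ _ K)
          (by rw [Nat.card_Ico]; omega)

lemma abs_card_Ico_one_ceil_sub_le {X : ℝ} (hX : 0 ≤ X) : |(#(Ico 1 ⌈X⌉₊) : ℝ) - X| ≤ 1 := by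
  have hle : X ≤ ⌈X⌉₊ := Nat.le_ceil X
  have hlt : (⌈X⌉₊ : ℝ) < X + 1 := Nat.ceil_lt_add_one hX
  rw [Nat.card_Ico, abs_le]
  rcases Nat.eq_zero_or_pos ⌈X⌉₊ with h0 | hpos
  · simp only [h0, Nat.zero_sub, Nat.cast_zero] at hle ⊢
    constructor <;> linarith
  · rw [Nat.cast_sub hpos, Nat.cast_one]
    constructor <;> linarith

lemma abs_card_filter_lt_sub_le [DecidableEq E] (c : ℕ → E) (q w z δ : ℝ) {X : ℝ} (hX : 0 ≤ X) :
    |(#{N ∈ Ico 1 ⌈X⌉₊ | w * weightedTail c q N < δ} : ℝ) - X| ≤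
      1 + #{N ∈ Ico 1 ⌈X⌉₊ | δ ≤ w * farTail c q z N}
        + #{N ∈ Ico 1 ⌈X⌉₊ | ∃ j < ⌈z⌉₊, c (N + j) ≠ 0} := by
  set I := Ico 1 ⌈X⌉₊
  have hbad : {N ∈ I | ¬ w * weightedTail c q N < δ} ⊆
      {N ∈ I | δ ≤ w * farTail c q z N} ∪ {N ∈ I | ∃ j < ⌈z⌉₊, c (N + j) ≠ 0} := by
    intro N hN
    simp only [mem_filter, mem_union, not_lt] at hN ⊢
    by_cases hhead : ∃ j < ⌈z⌉₊, c (N + j) ≠ 0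
    · exact Or.inr ⟨hN.1, hhead⟩
    · push Not at hhead
      rw [weightedTail_eq_farTail fun j hj => hhead j (Nat.lt_ceil.mpr hj)] at hN
      exact Or.inl hN
  have hbad_card : (#{N ∈ I | ¬ w * weightedTail c q N < δ} : ℝ) ≤
      #{N ∈ I | δ ≤ w * farTail c q z N} + #{N ∈ I | ∃ j < ⌈z⌉₊, c (N + j) ≠ 0} := by
    exact_mod_cast (card_le_card hbad).trans (card_union_le _ _)
  have hsplit : (#{N ∈ I | w * weightedTail c q N < δ} : ℝ)
      + #{N ∈ I | ¬ w * weightedTail c q N < δ} = #I := by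
    exact_mod_cast card_filter_add_card_filter_not _
  obtain ⟨hI₁, hI₂⟩ := abs_le.mp (abs_card_Ico_one_ceil_sub_le hX)
  rw [abs_le]
  constructor <;> linarith

lemma isLittleO_mul_of_isLittleO_div {α 𝕜 : Type*} [NormedField 𝕜] {l : Filter α}
    {f x g : α → 𝕜} (hg : ∀ n, g n ≠ 0) (h : f =o[l] fun n => x n / g n) :
    (fun n => g n * f n) =o[l] x :=
  ((isBigO_refl g l).mul_isLittleO h).congr_right fun n => mul_div_cancel₀ (x n) (hg n)

lemma isLittleO_card_filter_exists_lt_add {p : ℕ → Prop} [DecidablePred p] {x z : ℕ → ℝ}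
    {η : ℝ} (hη1 : η ≤ 1) (hz1 : ∀ n, 1 ≤ z n) (hxto : Tendsto x atTop atTop)
    (hsparse : (fun n => (#{m ∈ Ico 1 ⌈x n⌉₊ | p m} : ℝ)) =o[atTop] fun n => x n / z n) :
    (fun n => (#{N ∈ Ico 1 ⌈η * x n⌉₊ | ∃ j < ⌈z n⌉₊, p (N + j)} : ℝ)) =o[atTop] x := by
  by_cases hp : ∃ m, 1 ≤ m ∧ p m
  · obtain ⟨m₀, hm₀, hpm₀⟩ := hp
    have hzA := isLittleO_mul_of_isLittleO_div (fun n => (zero_lt_one.trans_le (hz1 n)).ne')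
      hsparse
    refine (IsBigO.of_norm_eventuallyLE ?_).trans_isLittleO (hzA.const_mul_left 4)
    filter_upwards [hxto.eventually_gt_atTop (m₀ : ℝ)] with n hn
    have hA : (1 : ℝ) ≤ #{m ∈ Ico 1 ⌈x n⌉₊ | p m} := by
      exact_mod_cast card_pos.mpr ⟨m₀, mem_filter.mpr ⟨mem_Ico.mpr ⟨hm₀, Nat.lt_ceil.mpr hn⟩, hpm₀⟩⟩
    have hK : (⌈z n⌉₊ : ℝ) ≤ z n + 1 := (Nat.ceil_lt_add_one (by linarith [hz1 n])).le
    have hηx : η * x n ≤ x n := mul_le_of_le_one_left (by linarith [(m₀.cast_nonneg : (0:ℝ) ≤ m₀)]) hη1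
    have hH : (#{N ∈ Ico 1 ⌈η * x n⌉₊ | ∃ j < ⌈z n⌉₊, p (N + j)} : ℝ)
        ≤ ⌈z n⌉₊ * #{m ∈ Ico 1 ⌈x n⌉₊ | p m} + ⌈z n⌉₊ := by
      exact_mod_cast card_filter_exists_lt_add_le (Nat.ceil_mono hηx) ⌈z n⌉₊
    rw [Real.norm_natCast]
    nlinarith [hz1 n]
  · push Not at hp
    have hempty : ∀ n, {N ∈ Ico 1 ⌈η * x n⌉₊ | ∃ j < ⌈z n⌉₊, p (N + j)} = ∅ := fun n =>
      filter_false_of_mem fun N hN ⟨j, _, hpj⟩ => hp (N + j) (by simp at hN; omega) hpj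
    simp only [hempty, card_empty, Nat.cast_zero]
    exact isLittleO_zero x atTop

lemma Nat.card_setOf_one_le_lt_and (X : ℝ) (P : ℕ → Prop) [DecidablePred P] :
    Nat.card {N : ℕ | 1 ≤ N ∧ (N : ℝ) < X ∧ P N} = #{N ∈ Ico 1 ⌈X⌉₊ | P N} := by
  have : {N : ℕ | 1 ≤ N ∧ (N : ℝ) < X ∧ P N} = ↑({N ∈ Ico 1 ⌈X⌉₊ | P N}) := by
    ext N
    simp [Nat.lt_ceil, and_assoc]
  rw [this, Nat.card_coe_set_eq, Set.ncard_coe_finset]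

theorem stmt3_general (c : ℕ → ℂ) (q : ℝ) (hq : 1 < q)
    (x w z : ℕ → ℝ) (hw1 : ∀ n, 1 ≤ w n) (hz1 : ∀ n, 1 ≤ z n)
    (η : ℝ) (hη0 : 0 < η) (hη1 : η ≤ 1)
    (hxto : Tendsto x atTop atTop)
    (hsparse : (fun n : ℕ => (Nat.card {m : ℕ | 1 ≤ m ∧ (m : ℝ) < x n ∧ c m ≠ 0} : ℝ))
      =o[atTop] (fun n : ℕ => x n / z n))
    (hR : (fun n : ℕ => ∑ N ∈ Finset.Ico 1 ⌈η * x n⌉₊, ∑' j : ℕ,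
        if z n ≤ (j : ℝ) then ‖c (N + j)‖ / q ^ j else 0)
      =o[atTop] (fun n : ℕ => x n / w n)) :
    ∀ δ : ℝ, 0 < δ →
      (fun n : ℕ => (Nat.card {N : ℕ | 1 ≤ N ∧ (N : ℝ) < η * x n ∧
          w n * ∑' j : ℕ, ‖c (N + j)‖ / q ^ j < δ} : ℝ) - η * x n)
        =o[atTop] (fun n : ℕ => x n) := by
  classical
  intro δ hδ
  simp only [Nat.card_setOf_one_le_lt_and] at hsparse ⊢
  have hhead := isLittleO_card_filter_exists_lt_add hη1 hz1 hxto hsparse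
  have hfar : (fun n => (#{N ∈ Ico 1 ⌈η * x n⌉₊ | δ ≤ w n * farTail c q (z n) N} : ℝ))
      =o[atTop] x := by
    have hwR := isLittleO_mul_of_isLittleO_div (fun n => (zero_lt_one.trans_le (hw1 n)).ne') hR
    refine (IsBigO.of_norm_eventuallyLE (Eventually.of_forall fun n => ?_)).trans_isLittleO
      (hwR.const_mul_left δ⁻¹)
    dsimp only
    rw [Real.norm_natCast, inv_mul_eq_div, mul_sum]
    exact card_filter_le_sum_div (fun N _ => mul_nonneg (zero_le_one.trans (hw1 n))
      (farTail_nonneg c (zero_le_one.trans hq.le) (z n) N)) hδ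
  have hone : (fun _ => (1 : ℝ)) =o[atTop] x :=
    (isLittleO_one_left_iff ℝ).mpr (tendsto_norm_atTop_atTop.comp hxto)
  refine (IsBigO.of_norm_eventuallyLE ?_).trans_isLittleO ((hone.add hfar).add hhead)
  filter_upwards [hxto.eventually_ge_atTop 0] with n hn
  exact abs_card_filter_lt_sub_le c q (w n) (z n) δ (mul_nonneg hη0.le hn)

theorem stmt3 (c : ℕ → ℂ) (q : ℝ) (hq : 1 < q)
    (hsum : Summable (fun n : ℕ => ‖c n‖ / q ^ n))
    (x w z : ℕ → ℝ) (hx1 : ∀ n, 1 ≤ x n) (hw1 : ∀ n, 1 ≤ w n) (hz1 : ∀ n, 1 ≤ z n)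
    (η : ℝ) (hη0 : 0 < η) (hη1 : η ≤ 1)
    (hxto : Tendsto x atTop atTop)
    (hsparse : (fun n : ℕ => (Nat.card {m : ℕ | 1 ≤ m ∧ (m : ℝ) < x n ∧ c m ≠ 0} : ℝ))
      =o[atTop] (fun n : ℕ => x n / z n))
    (hR : (fun n : ℕ => ∑ N ∈ Finset.Ico 1 ⌈η * x n⌉₊, ∑' j : ℕ,
        if z n ≤ (j : ℝ) then ‖c (N + j)‖ / q ^ j else 0)
      =o[atTop] (fun n : ℕ => x n / w n)) :
    ∀ δ : ℝ, 0 < δ →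
      (fun n : ℕ => (Nat.card {N : ℕ | 1 ≤ N ∧ (N : ℝ) < η * x n ∧
          w n * ∑' j : ℕ, ‖c (N + j)‖ / q ^ j < δ} : ℝ) - η * x n)
        =o[atTop] (fun n : ℕ => x n) :=
  stmt3_general c q hq x w z hw1 hz1 η hη0 hη1 hxto hsparse hR
end

section
/- Let A = {n³ : n ∈ ℤ_{≥0}} and let S = A + A be the set of sums of two nonnegative cubes. Then the number ∑_{n ∈ S, n ≥ 1} 2^{-n} + ∑_{n ≥ 1} 2^{-n³} is irrational. -/
/-!
Write the number as `∑ cₙ / 2ⁿ` with digits `cₙ ∈ {0, 1, 2}`, where `cₙ` counts whether `n` is a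
positive sum of two cubes and whether `n` is a positive cube. Below `R³` there are at most `R²`
sums of two cubes, so by pigeonhole the digits vanish on arbitrarily long blocks, while the cubes
make infinitely many digits nonzero. If the number were `p / q`, then multiplying by `q · 2ᴹ`,
with `M` the start of a block of more than `log₂ (4q)` zero digits, would give an integer strictly
between `0` and `1`.
-/

open Finset

section Digits

variable {b B : ℕ} {c : ℕ → ℕ}

lemma summable_digits (hb : 1 < b) (hc : ∀ n, c n ≤ B) :
    Summable fun n => (c n : ℝ) / b ^ n := by
  have hb' : (1 : ℝ) < b := by exact_mod_cast hb
  refine Summable.of_nonneg_of_le (fun n => by positivity) (fun n => ?_)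
    ((summable_geometric_of_lt_one (by positivity) (inv_lt_one_of_one_lt₀ hb')).mul_left (B : ℝ))
  rw [inv_pow, ← div_eq_mul_inv]
  gcongr
  exact_mod_cast hc n

lemma tsum_digits_le (hb : 1 < b) (hc : ∀ n, c n ≤ B) :
    ∑' n, (c n : ℝ) / b ^ n ≤ 2 * B := by
  have hb' : (2 : ℝ) ≤ b := by exact_mod_cast hb
  have hr : (b : ℝ)⁻¹ ≤ 1 / 2 := by rw [one_div]; exact inv_anti₀ two_pos hb'
  calc ∑' n, (c n : ℝ) / b ^ n ≤ ∑' n, (B : ℝ) * (b : ℝ)⁻¹ ^ n := by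
        refine (summable_digits hb hc).tsum_le_tsum (fun n => ?_)
          ((summable_geometric_of_lt_one (by positivity) (by linarith)).mul_left (B : ℝ))
        rw [inv_pow, ← div_eq_mul_inv]
        gcongr
        exact_mod_cast hc n
    _ = B * (1 - (b : ℝ)⁻¹)⁻¹ := by
        rw [tsum_mul_left, tsum_geometric_of_lt_one (by positivity) (by linarith)]
    _ ≤ B * 2 := by
        gcongr
        rw [inv_le_comm₀ (by linarith) two_pos]
        linarith
    _ = 2 * B := mul_comm _ _

lemma tsum_digits_pos (hb : 1 < b) (hc : ∀ n, c n ≤ B) {m : ℕ} (hm : c m ≠ 0) :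
    0 < ∑' n, (c n : ℝ) / b ^ n :=
  (summable_digits hb hc).tsum_pos (fun n => by positivity) m
    (div_pos (by exact_mod_cast Nat.pos_of_ne_zero hm) (by positivity))

lemma tsum_digits_eq_sum_add_tsum_shift (hb : 1 < b) (hc : ∀ n, c n ≤ B) (M : ℕ) :
    ∑' n, (c n : ℝ) / b ^ n =
      ∑ n ∈ range M, (c n : ℝ) / b ^ n + (∑' i, (c (i + M) : ℝ) / b ^ i) / b ^ M := by
  rw [← (summable_digits hb hc).sum_add_tsum_nat_add M, ← tsum_div_const]
  congr 1
  refine tsum_congr fun i => ?_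
  rw [pow_add, div_div]

lemma pow_mul_sum_digits (hb : b ≠ 0) (M : ℕ) :
    (b : ℝ) ^ M * ∑ n ∈ range M, (c n : ℝ) / b ^ n =
      ((∑ n ∈ range M, c n * b ^ (M - n) : ℕ) : ℝ) := by
  push_cast
  rw [mul_sum]
  refine sum_congr rfl fun n hn => ?_
  have hbn : (b : ℝ) ^ n ≠ 0 := pow_ne_zero _ (by exact_mod_cast hb)
  rw [← Nat.sub_add_cancel (mem_range.1 hn).le, pow_add, Nat.add_sub_cancel]
  field_simp

theorem irrational_tsum_digits (hb : 1 < b) (hc : ∀ n, c n ≤ B)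
    (hinf : ∀ N, ∃ n, N ≤ n ∧ c n ≠ 0)
    (hgap : ∀ g, ∃ M, ∀ n, M ≤ n → n < M + g → c n = 0) :
    Irrational (∑' n, (c n : ℝ) / b ^ n) := by
  rintro ⟨r, hr⟩
  set g := 2 * B * r.den
  obtain ⟨M, hM⟩ := hgap g
  set T := ∑' i, (c (i + M) : ℝ) / b ^ i
  have hT_pos : 0 < T := by
    obtain ⟨n, hMn, hn⟩ := hinf M
    exact tsum_digits_pos (c := fun i => c (i + M)) hb (fun _ => hc _)
      (m := n - M) (by rwa [Nat.sub_add_cancel hMn])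
  have hT_lt : (r.den : ℝ) * T < 1 := by
    have hT : T = (∑' i, (c (i + g + M) : ℝ) / b ^ i) / b ^ g := by
      have h := tsum_digits_eq_sum_add_tsum_shift (c := fun i => c (i + M)) hb (fun _ => hc _) g
      rwa [sum_eq_zero fun i hi => by simp [hM (i + M) (by omega) (by simp at hi; omega)],
        zero_add] at h
    have hg : (g : ℝ) < (b : ℝ) ^ g := by
      exact_mod_cast Nat.lt_two_pow_self.trans_le (Nat.pow_le_pow_left hb g)
    calc (r.den : ℝ) * T ≤ r.den * (2 * B / b ^ g) := by
          rw [hT]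
          gcongr
          exact tsum_digits_le hb fun _ => hc _
      _ = g / b ^ g := by push_cast [g]; ring
      _ < 1 := (div_lt_one (by positivity)).2 hg
  set W := ∑ n ∈ range M, c n * b ^ (M - n)
  have hz : ((r.num * b ^ M - r.den * W : ℤ) : ℝ) = r.den * T := by
    have hnum : (r.num : ℝ) = r.den * r := by
      exact_mod_cast (Rat.mul_den_eq_num r).symm.trans (mul_comm _ _)
    have hsplit := tsum_digits_eq_sum_add_tsum_shift hb hc M
    rw [← hr] at hsplit
    have hW := pow_mul_sum_digits (c := c) (by omega : b ≠ 0) M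
    push_cast
    rw [hnum, hsplit, ← hW]
    field_simp
    ring
  have h0 : 0 < r.num * b ^ M - r.den * W := by
    have : (0 : ℝ) < r.den * T := by positivity
    exact_mod_cast hz ▸ this
  have h1 : r.num * b ^ M - r.den * W < 1 := by exact_mod_cast hz ▸ hT_lt
  omega

end Digits

lemma exists_gap_of_subset_card_lt {s : Set ℕ} {t : Finset ℕ} {g K : ℕ}
    (hst : ∀ n ∈ s, n < K * g → n ∈ t) (ht : #t < K) :
    ∃ M, ∀ n, M ≤ n → n < M + g → n ∉ s := by
  by_contra! h
  choose f hf_ge hf_lt hf_mem using h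
  have hmono : StrictMono fun j => f (j * g) := strictMono_nat_of_lt_succ fun j => by
    have h₁ := hf_lt (j * g)
    have h₂ := hf_ge (j * g + g)
    show f (j * g) < f ((j + 1) * g)
    rw [Nat.succ_mul]
    omega
  have hsub : (range K).image (fun j => f (j * g)) ⊆ t := by
    intro n hn
    obtain ⟨j, hj, rfl⟩ := mem_image.1 hn
    refine hst _ (hf_mem _) ?_
    calc f (j * g) < j * g + g := hf_lt _
      _ = (j + 1) * g := (Nat.succ_mul j g).symm
      _ ≤ K * g := Nat.mul_le_mul_right _ (mem_range.1 hj)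
  have := card_le_card hsub
  rw [card_image_of_injective _ hmono.injective, card_range] at this
  omega

/-- At most `R²` sums of two `k`-th powers lie below `R³ ≤ Rᵏ`: too few to meet all `R² + 1`
windows of length `g = R - 1` below `R³`. -/
lemma exists_gap_sum_two_pow {k : ℕ} (hk : 3 ≤ k) (g : ℕ) :
    ∃ M, ∀ n, M ≤ n → n < M + g → ¬∃ a b : ℕ, n = a ^ k + b ^ k := by
  set R := g + 1
  refine exists_gap_of_subset_card_lt (s := {n | ∃ a b : ℕ, n = a ^ k + b ^ k})
    (t := (range R ×ˢ range R).image fun p => p.1 ^ k + p.2 ^ k) (K := R ^ 2 + 1) ?_ ?_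
  · rintro n ⟨a, b, rfl⟩ hn
    have hRk : (R ^ 2 + 1) * g ≤ R ^ k :=
      calc (R ^ 2 + 1) * g ≤ R ^ 3 := by simp only [R]; ring_nf; omega
        _ ≤ R ^ k := Nat.pow_le_pow_right (by omega) hk
    have ha : a < R := lt_of_pow_lt_pow_left₀ k (Nat.zero_le _) (by omega)
    have hb : b < R := lt_of_pow_lt_pow_left₀ k (Nat.zero_le _) (by omega)
    exact mem_image.2 ⟨(a, b), mem_product.2 ⟨mem_range.2 ha, mem_range.2 hb⟩, rfl⟩
  · calc #((range R ×ˢ range R).image fun p => p.1 ^ k + p.2 ^ k) ≤ #(range R ×ˢ range R) :=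
          card_image_le
      _ < R ^ 2 + 1 := by rw [card_product, card_range]; nlinarith

lemma indicator_one_div_pow (b : ℕ) (s : Set ℕ) (n : ℕ) :
    s.indicator (fun m => 1 / (b : ℝ) ^ m) n = (s.indicator 1 n : ℕ) / (b : ℝ) ^ n := by
  by_cases h : n ∈ s <;> simp [h]

lemma indicator_one_apply_le_one (s : Set ℕ) (n : ℕ) : s.indicator 1 n ≤ 1 :=
  Set.indicator_apply_le' (fun _ => le_rfl) fun _ => zero_le_one

lemma tsum_indicator_add_tsum_indicator {b : ℕ} (hb : 1 < b) (s t : Set ℕ) :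
    ∑' n, s.indicator (fun m => 1 / (b : ℝ) ^ m) n + ∑' n, t.indicator (fun m => 1 / (b : ℝ) ^ m) n
      = ∑' n, ((s.indicator 1 n + t.indicator 1 n : ℕ) : ℝ) / b ^ n := by
  simp only [indicator_one_div_pow]
  rw [← (summable_digits hb (indicator_one_apply_le_one s)).tsum_add
    (summable_digits hb (indicator_one_apply_le_one t))]
  push_cast
  simp only [add_div]

theorem stmt8 :
    Irrational ((∑' n : ℕ, Set.indicator
        {m : ℕ | 1 ≤ m ∧ ∃ a b : ℕ, m = a ^ 3 + b ^ 3} (fun m => (1 : ℝ) / 2 ^ m) n) +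
      ∑' n : ℕ, (1 : ℝ) / 2 ^ ((n + 1) ^ 3)) := by
  set s := {m : ℕ | 1 ≤ m ∧ ∃ a b : ℕ, m = a ^ 3 + b ^ 3}
  set t := Set.range fun k : ℕ => (k + 1) ^ 3
  have hcube_inj : Function.Injective fun k : ℕ => (k + 1) ^ 3 := fun i j h =>
    Nat.succ_injective (Nat.pow_left_injective (by norm_num) h)
  have hcubes : ∑' n : ℕ, (1 : ℝ) / 2 ^ ((n + 1) ^ 3) =
      ∑' n, t.indicator (fun m => (1 : ℝ) / 2 ^ m) n :=
    (tsum_range (fun m => (1 : ℝ) / 2 ^ m) hcube_inj).symm.trans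
      (tsum_subtype t fun m => (1 : ℝ) / 2 ^ m)
  rw [hcubes, show (2 : ℝ) = (2 : ℕ) by norm_num, tsum_indicator_add_tsum_indicator one_lt_two]
  refine irrational_tsum_digits (B := 2) one_lt_two (fun n => ?_) (fun N => ?_) (fun g => ?_)
  · exact add_le_add (indicator_one_apply_le_one s n) (indicator_one_apply_le_one t n)
  · refine ⟨(N + 1) ^ 3, (Nat.le_succ N).trans (Nat.le_self_pow (by norm_num) _), ?_⟩
    simp [t]
  · obtain ⟨M, hM⟩ := exists_gap_sum_two_pow le_rfl g
    refine ⟨M, fun n hMn hnM => ?_⟩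
    have hs : n ∉ s := fun h => hM n hMn hnM h.2
    have ht : n ∉ t := by
      rintro ⟨k, rfl⟩
      exact hM _ hMn hnM ⟨k + 1, 0, by ring⟩
    simp [hs, ht]
end

section
/- Let q > 1 be a Pisot or Salem number of degree d over ℚ, K = ℚ(q) with ring of integers O_K, and let (c(n)) be a sequence of elements of O_K with ∑ house(c(n))/q^n < ∞. Suppose ξ := ∑_{n≥1} c(n)/q^n lies in K, say ξ = γ/u with γ ∈ O_K and u ∈ ℤ_{≥1}. Then for every N with ξ_N := q^N ∑_{n≥N} c(n)/q^n ≠ 0, one has 1 ≤ |N_{K/ℚ}(u ξ_N)| and |N_{K/ℚ}(u ξ_N)| = O(ξ_N(|c|) · S_c(N)^{d-1}) as N → ∞, where ξ_N(|c|) = ∑_{j≥0} |c(N+j)|/q^j and S_c(N) = ∑_{n<N} house(c(n)). -/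
open Filter Asymptotics Polynomial IntermediateField

/-- The house of a real algebraic number: the maximum absolute value of the
complex roots of its minimal polynomial over `ℚ` (its Galois conjugates). -/
noncomputable def house (x : ℝ) : ℝ :=
  sSup ((fun z : ℂ => ‖z‖) '' {z : ℂ | Polynomial.aeval z (minpoly ℚ x) = 0})

/-!
For `N ≥ 1` the element `x_N = q^N γ - u ∑_{1 ≤ n < N} c(n) q^(N-n)` of `K` is an algebraic
integer whose real value is `u ∑_j c(N+j) / q^j`; when this tail is nonzero, the norm of `x_N`
is a nonzero rational integer. The norm is the product of the conjugates of `x_N`: the real one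
is at most `u ξ_N(|c|)`, and every other one is at most `house γ + u S_c(N)`, because there the
conjugate of `q` has modulus at most `1`. As soon as some `c(m) ≠ 0`, `S_c(N)` is eventually
bounded below, so that `house γ + u S_c(N) = O(S_c(N))`.
-/

lemma norm_le_house {x : ℝ} (hx : IsIntegral ℚ x) {z : ℂ} (hz : aeval z (minpoly ℚ x) = 0) :
    ‖z‖ ≤ house x := by
  refine le_csSup ?_ ⟨z, hz, rfl⟩
  refine (((minpoly ℚ x).rootSet_finite ℂ).image _).bddAbove.mono (Set.image_mono fun w hw => ?_)
  exact (mem_rootSet_of_ne (minpoly.ne_zero hx)).mpr hw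

lemma abs_le_house {x : ℝ} (hx : IsIntegral ℚ x) : |x| ≤ house x := by
  simpa using norm_le_house hx (z := algebraMap ℝ ℂ x)
    (by rw [aeval_algebraMap_apply, minpoly.aeval, map_zero])

lemma house_nonneg {x : ℝ} (hx : IsIntegral ℚ x) : 0 ≤ house x :=
  (abs_nonneg x).trans (abs_le_house hx)

lemma norm_algHom_le_house {K : IntermediateField ℚ ℝ} (σ : K →ₐ[ℚ] ℂ) {y : K}
    (hy : IsIntegral ℚ (y : ℝ)) : ‖σ y‖ ≤ house y := by
  refine norm_le_house hy ?_
  rw [show (y : ℝ) = algebraMap K ℝ y from rfl, minpoly.algebraMap_eq (algebraMap K ℝ).injective,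
    aeval_algHom_apply, minpoly.aeval, map_zero]

lemma IntermediateField.isIntegral_rat_coe {K : IntermediateField ℚ ℝ} {y : K}
    (hy : IsIntegral ℤ y) : IsIntegral ℚ (y : ℝ) :=
  (hy.algebraMap (B := ℝ)).tower_top

/-- `u ξ_N` in the notation of the paper, with `p = q`. -/
def tailElement {R : Type*} [CommRing R] (p γ : R) (u : ℕ) (c : ℕ → R) (N : ℕ) : R :=
  p ^ N * γ - u * ∑ n ∈ Finset.Ico 1 N, c n * p ^ (N - n)

lemma map_tailElement {R S F : Type*} [CommRing R] [CommRing S] [FunLike F R S]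
    [RingHomClass F R S] (f : F) (p γ : R) (u : ℕ) (c : ℕ → R) (N : ℕ) :
    f (tailElement p γ u c N) = tailElement (f p) (f γ) u (fun n => f (c n)) N := by
  simp [tailElement, map_sum]

lemma IsIntegral.tailElement {R A : Type*} [CommRing R] [CommRing A] [Algebra R A] {p γ : A}
    (hp : IsIntegral R p) (hγ : IsIntegral R γ) (u : ℕ) {c : ℕ → A}
    (hc : ∀ n, IsIntegral R (c n)) (N : ℕ) : IsIntegral R (tailElement p γ u c N) :=
  ((hp.pow N).mul hγ).sub <|
    (isIntegral_natCast u).mul <| IsIntegral.sum _ fun n _ => (hc n).mul (hp.pow _)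

lemma IntermediateField.coe_tailElement {K : IntermediateField ℚ ℝ} (p γ : K) (u : ℕ)
    (c : ℕ → K) (N : ℕ) :
    ((tailElement p γ u c N : K) : ℝ) = tailElement (p : ℝ) γ u (fun n => c n) N :=
  map_tailElement K.val p γ u c N

lemma norm_tailElement_le {R : Type*} [SeminormedCommRing R] [NormOneClass R] {p : R}
    (hp : ‖p‖ ≤ 1) (γ : R) (u : ℕ) (c : ℕ → R) (N : ℕ) :
    ‖tailElement p γ u c N‖ ≤ ‖γ‖ + u * ∑ n ∈ Finset.Ico 1 N, ‖c n‖ := by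
  have hpow (k : ℕ) : ‖p ^ k‖ ≤ 1 := (norm_pow_le p k).trans (pow_le_one₀ (norm_nonneg p) hp)
  refine (norm_sub_le _ _).trans (add_le_add ?_ ?_)
  · exact (norm_mul_le _ _).trans (mul_le_of_le_one_left (norm_nonneg γ) (hpow N))
  · refine (norm_mul_le _ _).trans (mul_le_mul ?_ ?_ (norm_nonneg _) u.cast_nonneg)
    · simpa using Nat.norm_cast_le (α := R) u
    refine (norm_sum_le _ _).trans (Finset.sum_le_sum fun n _ => ?_)
    exact (norm_mul_le _ _).trans (mul_le_of_le_one_right (norm_nonneg _) (hpow _))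

lemma norm_div_pow_of_pos {q : ℝ} (hq : 0 < q) (x : ℝ) (n : ℕ) : ‖x / q ^ n‖ = |x| / q ^ n := by
  rw [Real.norm_eq_abs, abs_div, abs_of_pos (pow_pos hq n)]

lemma summable_abs_div_pow_of_abs_le {a h : ℕ → ℝ} {q : ℝ} (hq : 0 < q)
    (hah : ∀ n, |a n| ≤ h n) (hs : Summable fun n => h n / q ^ n) :
    Summable fun n => |a n| / q ^ n :=
  hs.of_nonneg_of_le (fun n => by positivity) fun n => by gcongr; exact hah n

lemma summable_tail_div_pow {a : ℕ → ℝ} {q : ℝ} (hq : q ≠ 0)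
    (ha : Summable fun n => a n / q ^ n) (N : ℕ) : Summable fun j => a (N + j) / q ^ j := by
  refine (((summable_nat_add_iff N).mpr ha).mul_left (q ^ N)).congr fun j => ?_
  rw [add_comm j N, pow_add]
  field_simp

lemma abs_tsum_div_pow_le {a : ℕ → ℝ} {q : ℝ} (hq : 0 < q)
    (ha : Summable fun n => |a n| / q ^ n) :
    |∑' n, a n / q ^ n| ≤ ∑' n, |a n| / q ^ n := by
  simpa only [norm_div_pow_of_pos hq, Real.norm_eq_abs] using
    norm_tsum_le_tsum_norm (ha.congr fun n => (norm_div_pow_of_pos hq _ n).symm)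

lemma tailElement_tsum_eq {a : ℕ → ℝ} {q : ℝ} (hq : q ≠ 0)
    (ha : Summable fun n => a n / q ^ n) (u : ℕ) {N : ℕ} (hN : 1 ≤ N) :
    tailElement q (u * ∑' n, a (n + 1) / q ^ (n + 1)) u a N =
      u * ∑' j, a (N + j) / q ^ j := by
  obtain ⟨M, rfl⟩ := Nat.exists_eq_add_of_le' hN
  have hsplit := ((summable_nat_add_iff 1).mpr ha).sum_add_tsum_nat_add M
  have hhead : q ^ (M + 1) * ∑ i ∈ Finset.range M, a (i + 1) / q ^ (i + 1) =
      ∑ n ∈ Finset.Ico 1 (M + 1), a n * q ^ (M + 1 - n) := by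
    rw [Finset.mul_sum, Finset.sum_Ico_eq_sum_range, Nat.add_sub_cancel]
    refine Finset.sum_congr rfl fun i hi => ?_
    rw [Finset.mem_range] at hi
    rw [add_comm 1 i, show M + 1 = (M + 1 - (i + 1)) + (i + 1) by omega, pow_add,
      Nat.add_sub_cancel]
    field_simp
  have htail : q ^ (M + 1) * ∑' i, a (i + M + 1) / q ^ (i + M + 1) =
      ∑' j, a (M + 1 + j) / q ^ j := by
    rw [← tsum_mul_left]
    refine tsum_congr fun i => ?_
    rw [show i + M + 1 = M + 1 + i by omega, pow_add]
    field_simp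
    ring
  rw [tailElement, ← hsplit, ← htail, ← hhead]
  ring

lemma one_le_abs_norm_of_isIntegral {K : Type*} [Field K] [Algebra ℚ K] [FiniteDimensional ℚ K]
    {x : K} (hx : IsIntegral ℤ x) (hx0 : x ≠ 0) : 1 ≤ |Algebra.norm ℚ x| := by
  obtain ⟨m, hm⟩ := IsIntegrallyClosed.isIntegral_iff.mp (Algebra.isIntegral_norm ℚ hx)
  have hm0 : m ≠ 0 := by
    rintro rfl
    exact hx0 (by simpa using hm.symm)
  rw [← hm, eq_intCast]
  exact_mod_cast Int.one_le_abs hm0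

lemma abs_norm_le_mul_pow {K : Type*} [Field K] [Algebra ℚ K] [FiniteDimensional ℚ K]
    (σ₀ : K →ₐ[ℚ] ℂ) (x : K) {B : ℝ} (hB : ∀ σ ≠ σ₀, ‖σ x‖ ≤ B) :
    |(Algebra.norm ℚ x : ℝ)| ≤ ‖σ₀ x‖ * B ^ (Module.finrank ℚ K - 1) := by
  classical
  rw [← Complex.norm_ratCast, ← eq_ratCast (algebraMap ℚ ℂ), Algebra.norm_eq_prod_embeddings,
    norm_prod, ← Finset.mul_prod_erase _ _ (Finset.mem_univ σ₀)]
  gcongr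
  calc ∏ σ ∈ Finset.univ.erase σ₀, ‖σ x‖ ≤ ∏ _σ ∈ Finset.univ.erase σ₀, B :=
        Finset.prod_le_prod (fun _ _ => norm_nonneg _)
          fun σ hσ => hB σ (Finset.ne_of_mem_erase hσ)
    _ = B ^ (Module.finrank ℚ K - 1) := by
        rw [Finset.prod_const, Finset.card_erase_of_mem (Finset.mem_univ _), Finset.card_univ,
          AlgHom.card]

noncomputable def IntermediateField.complexVal (K : IntermediateField ℚ ℝ) : K →ₐ[ℚ] ℂ :=
  ((Algebra.ofId ℝ ℂ).restrictScalars ℚ).comp K.val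

lemma IntermediateField.complexVal_apply (K : IntermediateField ℚ ℝ) (y : K) :
    K.complexVal y = ((y : ℝ) : ℂ) :=
  rfl

lemma norm_algHom_gen_le_one {q : ℝ} (hq : IsIntegral ℚ q)
    (hconj : ∀ z : ℂ, aeval z (minpoly ℚ q) = 0 → z ≠ q → ‖z‖ ≤ 1)
    (σ : ℚ⟮q⟯ →ₐ[ℚ] ℂ) (hσ : σ ≠ ℚ⟮q⟯.complexVal) : ‖σ (AdjoinSimple.gen ℚ q)‖ ≤ 1 := by
  refine hconj _ ?_ fun h => hσ ?_
  · have hmin := minpoly.algebraMap_eq (A := ℚ) (algebraMap ℚ⟮q⟯ ℝ).injective (AdjoinSimple.gen ℚ q)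
    rw [AdjoinSimple.algebraMap_gen] at hmin
    rw [hmin, aeval_algHom_apply, minpoly.aeval, map_zero]
  · refine (adjoin.powerBasis hq).algHom_ext ?_
    rw [adjoin.powerBasis_gen]
    exact h.trans (congrArg _ (AdjoinSimple.algebraMap_gen ℚ q).symm)

lemma norm_algHom_tailElement_le {q : ℝ} (hq : IsIntegral ℚ q)
    (hconj : ∀ z : ℂ, aeval z (minpoly ℚ q) = 0 → z ≠ q → ‖z‖ ≤ 1)
    {σ : ℚ⟮q⟯ →ₐ[ℚ] ℂ} (hσ : σ ≠ ℚ⟮q⟯.complexVal) {γ : ℚ⟮q⟯} (hγ : IsIntegral ℚ (γ : ℝ))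
    (u : ℕ) {c : ℕ → ℚ⟮q⟯} (hc : ∀ n, IsIntegral ℚ (c n : ℝ)) (N : ℕ) :
    ‖σ (tailElement (AdjoinSimple.gen ℚ q) γ u c N)‖ ≤
      house γ + u * ∑ n ∈ Finset.Ico 1 N, house (c n) := by
  rw [map_tailElement]
  refine (norm_tailElement_le (norm_algHom_gen_le_one hq hconj σ hσ) _ u _ N).trans ?_
  gcongr with n
  · exact norm_algHom_le_house σ hγ
  · exact norm_algHom_le_house σ (hc n)

lemma abs_norm_tailElement_le {q : ℝ} (hq : IsIntegral ℚ q)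
    (hconj : ∀ z : ℂ, aeval z (minpoly ℚ q) = 0 → z ≠ q → ‖z‖ ≤ 1)
    {γ : ℚ⟮q⟯} (hγ : IsIntegral ℚ (γ : ℝ)) (u : ℕ) {c : ℕ → ℚ⟮q⟯}
    (hc : ∀ n, IsIntegral ℚ (c n : ℝ)) {N : ℕ} {R : ℝ}
    (hR : |((tailElement (AdjoinSimple.gen ℚ q) γ u c N : ℚ⟮q⟯) : ℝ)| ≤ R) :
    |(Algebra.norm ℚ (tailElement (AdjoinSimple.gen ℚ q) γ u c N) : ℝ)| ≤
      R * (house γ + u * ∑ n ∈ Finset.Ico 1 N, house (c n)) ^ (Module.finrank ℚ ℚ⟮q⟯ - 1) := by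
  have : FiniteDimensional ℚ ℚ⟮q⟯ := adjoin.finiteDimensional hq
  refine (abs_norm_le_mul_pow _ _ fun σ hσ =>
    norm_algHom_tailElement_le hq hconj hσ hγ u hc N).trans ?_
  have hB : 0 ≤ house γ + u * ∑ n ∈ Finset.Ico 1 N, house (c n) :=
    add_nonneg (house_nonneg hγ)
      (mul_nonneg u.cast_nonneg (Finset.sum_nonneg fun n _ => house_nonneg (hc n)))
  rw [complexVal_apply, Complex.norm_real, Real.norm_eq_abs]
  gcongr

lemma isBigO_const_add_mul {S : ℕ → ℝ} {ε : ℝ} (hε : 0 < ε) (hS : ∀ᶠ N in atTop, ε ≤ S N)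
    (A B : ℝ) : (fun N => A + B * S N) =O[atTop] S := by
  refine IsBigO.add (IsBigO.of_bound (|A| / ε) (hS.mono fun N hN => ?_))
    ((isBigO_refl S atTop).const_mul_left B)
  rw [Real.norm_eq_abs, Real.norm_eq_abs, div_mul_eq_mul_div, le_div_iff₀ hε]
  gcongr
  exact hN.trans (le_abs_self _)

lemma isBigO_tsum_mul_sum_pow {a h f : ℕ → ℝ} {q A B : ℝ} (k : ℕ) (hah : ∀ n, |a n| ≤ h n)
    (hf : ∀ᶠ N in atTop,
      |f N| ≤ B * (∑' j, |a (N + j)| / q ^ j) * (A + B * ∑ n ∈ Finset.Ico 1 N, h n) ^ k) :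
    f =O[atTop] fun N => (∑' j, |a (N + j)| / q ^ j) * (∑ n ∈ Finset.Ico 1 N, h n) ^ k := by
  by_cases ha : ∃ m, 1 ≤ m ∧ a m ≠ 0
  · obtain ⟨m, hm, ham⟩ := ha
    have hS : ∀ᶠ N in atTop, h m ≤ ∑ n ∈ Finset.Ico 1 N, h n :=
      (eventually_gt_atTop m).mono fun N hN => Finset.single_le_sum
        (fun n _ => (abs_nonneg _).trans (hah n)) (Finset.mem_Ico.mpr ⟨hm, hN⟩)
    refine (IsBigO.of_bound |B| (hf.mono fun N hN => ?_)).trans <| (isBigO_refl _ _).mul <|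
      (isBigO_const_add_mul ((abs_pos.mpr ham).trans_le (hah m)) hS A B).pow k
    rw [Real.norm_eq_abs, Real.norm_eq_abs, ← abs_mul, ← mul_assoc]
    exact hN.trans (le_abs_self _)
  · push Not at ha
    refine IsBigO.of_bound' ((hf.and (eventually_ge_atTop 1)).mono fun N ⟨hN, hN1⟩ => ?_)
    have htail : ∑' j, |a (N + j)| / q ^ j = 0 := by simp [fun j => ha (N + j) (by omega)]
    rw [htail, mul_zero, zero_mul] at hN
    exact (norm_nonneg _).trans' (by simpa using hN)

theorem stmt19 (q : ℝ) (hq1 : 1 < q) (hqint : IsIntegral ℤ q)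
    (hconj : ∀ z : ℂ, Polynomial.aeval z (minpoly ℚ q) = 0 → z ≠ (q : ℂ) →
      ‖z‖ ≤ 1)
    (d : ℕ) (hd : d = (minpoly ℚ q).natDegree)
    (K : IntermediateField ℚ ℝ) (hK : K = ℚ⟮q⟯)
    (c : ℕ → K) (hcint : ∀ n, IsIntegral ℤ (c n))
    (hsum : Summable (fun n : ℕ => house ((c n : ℝ)) / q ^ n))
    (γ : K) (hγ : IsIntegral ℤ γ) (u : ℕ) (hu : 1 ≤ u)
    (hξ : (γ : ℝ) = u * ∑' n : ℕ, ((c (n + 1) : ℝ)) / q ^ (n + 1))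
    (qK : K) (hqK : (qK : ℝ) = q) :
    (∀ N : ℕ, 1 ≤ N → (∑' j : ℕ, ((c (N + j) : ℝ)) / q ^ j) ≠ 0 →
      1 ≤ |Algebra.norm ℚ
        (qK ^ N * γ - (u : K) * ∑ n ∈ Finset.Ico 1 N, c n * qK ^ (N - n))|) ∧
    IsBigO atTop
      (fun N : ℕ => ((|Algebra.norm ℚ
        (qK ^ N * γ - (u : K) * ∑ n ∈ Finset.Ico 1 N, c n * qK ^ (N - n))| : ℚ) : ℝ))
      (fun N : ℕ => (∑' j : ℕ, |(c (N + j) : ℝ)| / q ^ j) *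
        (∑ n ∈ Finset.Ico 1 N, house ((c n : ℝ))) ^ (d - 1)) := by
  subst hK
  have hqQ : IsIntegral ℚ q := hqint.tower_top
  have : FiniteDimensional ℚ ℚ⟮q⟯ := adjoin.finiteDimensional hqQ
  obtain rfl : qK = AdjoinSimple.gen ℚ q := Subtype.ext (hqK.trans (AdjoinSimple.coe_gen ℚ q).symm)
  have hq0 : 0 < q := zero_lt_one.trans hq1
  have hcQ (n : ℕ) : IsIntegral ℚ (c n : ℝ) := isIntegral_rat_coe (hcint n)
  have hsabs := summable_abs_div_pow_of_abs_le hq0 (fun n => abs_le_house (hcQ n)) hsum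
  have hreal (N : ℕ) (hN : 1 ≤ N) : ((tailElement (AdjoinSimple.gen ℚ q) γ u c N : ℚ⟮q⟯) : ℝ) =
      u * ∑' j, (c (N + j) : ℝ) / q ^ j := by
    rw [coe_tailElement, hqK, hξ]
    exact tailElement_tsum_eq hq0.ne'
      (hsabs.of_norm_bounded fun n => (norm_div_pow_of_pos hq0 _ n).le) u hN
  have hgen : IsIntegral ℤ (AdjoinSimple.gen ℚ q) :=
    (isIntegral_algebraMap_iff (algebraMap ℚ⟮q⟯ ℝ).injective).mp (hqK ▸ hqint)
  refine ⟨fun N hN htail => one_le_abs_norm_of_isIntegral (hgen.tailElement hγ u hcint N)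
    fun h0 => htail ?_, ?_⟩
  · have h := hreal N hN
    rw [show tailElement (AdjoinSimple.gen ℚ q) γ u c N = 0 from h0, ZeroMemClass.coe_zero] at h
    exact (mul_eq_zero.mp h.symm).resolve_left (Nat.cast_ne_zero.mpr (by omega))
  · refine isBigO_tsum_mul_sum_pow _ (fun n => abs_le_house (hcQ n)) (A := house γ) (B := u) ?_
    filter_upwards [eventually_ge_atTop 1] with N hN
    rw [Rat.cast_abs, abs_abs, hd, ← adjoin.finrank hqQ]
    refine abs_norm_tailElement_le hqQ hconj (isIntegral_rat_coe hγ) u hcQ ?_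
    rw [hreal N hN, abs_mul, Nat.abs_cast]
    gcongr
    exact abs_tsum_div_pow_le hq0 (summable_tail_div_pow hq0.ne' hsabs N)
end
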